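/- arXiv:2201.08553 — 2 statements merged into one kernel-verified Lean document; each statement's English description precedes it below -/
import Mathlib

section
/- The curvature of the sine lane-changing trajectory is bounded in absolute value by π·a_p/v² for all x, where M = v·√(2|yd|/a_p): since |y_r''(x)| ≤ π·a_p/v² and (1 + y_r'(x)²)^{3/2} ≥ 1, we have |K(x)| ≤ π·a_p/v². -/
open Real

theorem sine_trajectory_curvature_bound (y0 yd x0 v a_p M : ℝ)
    (hv : 0 < v) (ha : 0 < a_p) (hyd : yd ≠ 0)
    (hM : M = v * Real.sqrt (2 * |yd| / a_p))
    (y_r K : ℝ → ℝ)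
    (hy : ∀ x, y_r x = y0 + (yd / (2 * π)) *
      ((2 * π / M) * (x - x0) - Real.sin ((2 * π / M) * (x - x0))))
    (hK : ∀ x, K x = deriv (deriv y_r) x /
      (1 + (deriv y_r x) ^ 2) ^ ((3 : ℝ) / 2)) :
    ∀ x, |K x| ≤ π * a_p / v ^ 2 := by
  have hpi : (0:ℝ) < π := Real.pi_pos
  have hyd' : 0 < |yd| := abs_pos.mpr hyd
  have hs : 0 < 2 * |yd| / a_p := by positivity
  have hM0 : 0 < M := by
    rw [hM]; exact mul_pos hv (Real.sqrt_pos.mpr hs)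
  have hM2 : M ^ 2 = v ^ 2 * (2 * |yd| / a_p) := by
    rw [hM, mul_pow, Real.sq_sqrt hs.le]
  set c := yd / (2 * π) with hc
  set ω := 2 * π / M with hω
  have hyf : y_r = fun x => y0 + c * (ω * (x - x0) - Real.sin (ω * (x - x0))) :=
    funext hy
  have hd1 : deriv y_r = fun x => c * (ω - Real.cos (ω * (x - x0)) * ω) := by
    funext x
    rw [hyf]
    have hinner : HasDerivAt (fun x : ℝ => ω * (x - x0)) ω x := by
      simpa using ((hasDerivAt_id x).sub_const x0).const_mul ω
    have hsin : HasDerivAt (fun x : ℝ => Real.sin (ω * (x - x0)))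
        (Real.cos (ω * (x - x0)) * ω) x :=
      (Real.hasDerivAt_sin _).comp x hinner
    exact (((hinner.sub hsin).const_mul c).const_add y0).deriv
  have hd2 : ∀ x, deriv (deriv y_r) x = c * (Real.sin (ω * (x - x0)) * ω * ω) := by
    intro x
    rw [hd1]
    have hinner : HasDerivAt (fun x : ℝ => ω * (x - x0)) ω x := by
      simpa using ((hasDerivAt_id x).sub_const x0).const_mul ω
    have hcos : HasDerivAt (fun x : ℝ => Real.cos (ω * (x - x0)))
        (-Real.sin (ω * (x - x0)) * ω) x :=
      (Real.hasDerivAt_cos _).comp x hinner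
    have : HasDerivAt (fun x : ℝ => c * (ω - Real.cos (ω * (x - x0)) * ω))
        (c * (0 - -Real.sin (ω * (x - x0)) * ω * ω)) x :=
      ((hasDerivAt_const x ω).sub (hcos.mul_const ω)).const_mul c
    have := this.deriv
    rw [this]; ring
  have hbound : |c| * ω ^ 2 = π * a_p / v ^ 2 := by
    have : |c| = |yd| / (2 * π) := by
      rw [hc, abs_div, abs_of_pos (by positivity : (0:ℝ) < 2 * π)]
    rw [this, hω, div_pow, div_mul_div_comm]
    rw [hM2]
    field_simp
  intro x
  rw [hK]
  have hden : (1:ℝ) ≤ (1 + (deriv y_r x) ^ 2) ^ ((3:ℝ)/2) := by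
    calc (1:ℝ) = (1:ℝ) ^ ((3:ℝ)/2) := (Real.one_rpow _).symm
    _ ≤ (1 + (deriv y_r x) ^ 2) ^ ((3:ℝ)/2) :=
        Real.rpow_le_rpow (by norm_num) (by nlinarith [sq_nonneg (deriv y_r x)]) (by norm_num)
  have hden0 : (0:ℝ) < (1 + (deriv y_r x) ^ 2) ^ ((3:ℝ)/2) := lt_of_lt_of_le one_pos hden
  have hnum : |deriv (deriv y_r) x| ≤ π * a_p / v ^ 2 := by
    rw [hd2, ← hbound]
    have h1 : |c * (Real.sin (ω * (x - x0)) * ω * ω)| = |c| * |Real.sin (ω * (x - x0))| * ω ^ 2 := by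
      rw [abs_mul, abs_mul, abs_mul, abs_of_pos (by positivity : (0:ℝ) < ω)]
      ring
    rw [h1]
    calc |c| * |Real.sin (ω * (x - x0))| * ω ^ 2 ≤ |c| * 1 * ω ^ 2 := by
          gcongr
          exact Real.abs_sin_le_one _
      _ = |c| * ω ^ 2 := by ring
  rw [abs_div, abs_of_pos hden0]
  calc |deriv (deriv y_r) x| / (1 + (deriv y_r x) ^ 2) ^ ((3:ℝ)/2)
      ≤ |deriv (deriv y_r) x| / 1 := by
        apply div_le_div_of_nonneg_left (abs_nonneg _) one_pos hden
    _ = |deriv (deriv y_r) x| := by ring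
    _ ≤ π * a_p / v ^ 2 := hnum
end

section
/- If (1/2)·f_v² − f_v·f_{ėx} − f_d > 0, f_v < 0 and f_d > 0, then for all sufficiently small real frequencies ω ≠ 0 the transfer-function magnitude |G(iω)|² = (f_{ėx}²·ω² + f_d²)/((f_d − ω²)² + (f_v − f_{ėx})²·ω²) is strictly less than 1 (asymptotic/string stability at low frequencies). -/
theorem string_stability_low_freq (f_v f_ex f_d : ℝ)
    (hv : f_v < 0) (hd : 0 < f_d)
    (h : (1 / 2) * f_v ^ 2 - f_v * f_ex - f_d > 0) :
    ∃ ε > 0, ∀ ω : ℝ, 0 < |ω| → |ω| < ε →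
      (f_ex ^ 2 * ω ^ 2 + f_d ^ 2) /
        ((f_d - ω ^ 2) ^ 2 + (f_v - f_ex) ^ 2 * ω ^ 2) < 1 := by
  refine ⟨1, one_pos, fun ω hω _ => ?_⟩
  have hne : ω ≠ 0 := by simpa using hω.ne'
  have hω2 : 0 < ω ^ 2 := by positivity
  have hc : 0 < ω ^ 2 * (ω ^ 2 + (f_v ^ 2 - 2 * f_v * f_ex - 2 * f_d)) := by
    apply mul_pos hω2; nlinarith
  have hkey : (f_d - ω ^ 2) ^ 2 + (f_v - f_ex) ^ 2 * ω ^ 2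
      = f_ex ^ 2 * ω ^ 2 + f_d ^ 2 + ω ^ 2 * (ω ^ 2 + (f_v ^ 2 - 2 * f_v * f_ex - 2 * f_d)) := by
    ring
  rw [div_lt_one (by nlinarith [mul_nonneg (sq_nonneg f_ex) hω2.le, sq_nonneg f_d])]
  linarith [mul_nonneg (sq_nonneg f_ex) hω2.le]
end
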